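/- Let d ≥ 2 be an integer, let ε ∈ ℂ be a primitive d-th root of unity, and let φ ∈ ℂ[x] satisfy φ(εz + (εz)⁻¹) = φ(z + z⁻¹) for all z ∈ ℂ∖{0}. Then there exists a polynomial P ∈ ℂ[x] such that φ = P∘T_d; moreover, if φ is nonconstant then d divides deg φ. -/

import Mathlib

/-!
Write `T_d` for the normalized Chebyshev polynomial. The polynomials `φ` with
`φ(εz + (εz)⁻¹) = φ(z + z⁻¹)` form a subalgebra of `ℂ[x]` containing `T_d`. For such a `φ ≠ 0`
of degree `n`, clearing denominators in `zⁿ φ(z + z⁻¹)` gives a polynomial `F` with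
`F(εz) = εⁿ F(z)` whose constant term is the leading coefficient of `φ`; hence `εⁿ = 1`, i.e.
`d ∣ n`. Since `T_d` is monic of degree `d`, subtracting a multiple of `T_d ^ (n / d)` lowers the
degree of `φ` while keeping it invariant, and induction on the degree puts `φ` in `ℂ[T_d]`.
-/

open Polynomial

namespace Polynomial.Chebyshev

variable {R : Type*} [CommRing R] [IsDomain R] [NeZero (2 : R)]

theorem natDegree_C_natCast (n : ℕ) : (C R n).natDegree = n := by
  have h := congrArg natDegree (C_comp_two_mul_X R n)
  rwa [natDegree_comp, ← C_ofNat, natDegree_C_mul_X _ two_ne_zero, mul_one,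
    natDegree_C_mul two_ne_zero, natDegree_T, Int.natAbs_natCast] at h

theorem monic_C_natCast {n : ℕ} (hn : n ≠ 0) : (C R n).Monic := by
  have h := congrArg leadingCoeff (C_comp_two_mul_X R n)
  rw [← C_ofNat, leadingCoeff_comp (by rw [natDegree_C_mul_X _ two_ne_zero]; exact one_ne_zero),
    leadingCoeff_C_mul_X, natDegree_C_natCast, leadingCoeff_mul, leadingCoeff_C, leadingCoeff_T,
    Int.natAbs_natCast, ← pow_succ', Nat.sub_add_cancel (Nat.one_le_iff_ne_zero.mpr hn)] at h
  exact mul_right_cancel₀ (pow_ne_zero _ two_ne_zero) (h.trans (one_mul _).symm)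

end Polynomial.Chebyshev

section RotationInvariants

variable {K : Type*} [Field K]

theorem exists_ne_zero_add_inv_eq [IsAlgClosed K] (w : K) : ∃ z : K, z ≠ 0 ∧ z + z⁻¹ = w := by
  have hdeg : (X ^ 2 - C w * X + 1 : K[X]).degree = 2 := by compute_degree!
  obtain ⟨z, hz⟩ := IsAlgClosed.exists_root _ (hdeg ▸ two_ne_zero)
  have hz : z ^ 2 - w * z + 1 = 0 := by simpa using hz
  have hz0 : z ≠ 0 := by rintro rfl; simp at hz
  refine ⟨z, hz0, ?_⟩
  field_simp
  linear_combination hz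

def rotationInvariants (ε : K) : Subalgebra K K[X] where
  carrier := {φ | ∀ z : K, z ≠ 0 → φ.eval (ε * z + (ε * z)⁻¹) = φ.eval (z + z⁻¹)}
  mul_mem' ha hb z hz := by simp only [eval_mul, ha z hz, hb z hz]
  add_mem' ha hb z hz := by simp only [eval_add, ha z hz, hb z hz]
  algebraMap_mem' c z _ := by simp only [algebraMap_eq, eval_C]

namespace Polynomial.Chebyshev

theorem C_natCast_eval_add_inv {z : K} (hz : z ≠ 0) (n : ℕ) :
    (C K n).eval (z + z⁻¹) = z ^ n + z⁻¹ ^ n := by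
  rw [← dickson_one_one_eq_chebyshev_C, dickson_one_one_eval_add_inv _ _ (mul_inv_cancel₀ hz)]

theorem eq_C_natCast_of_eval_add_inv [IsAlgClosed K] {T : K[X]} {n : ℕ}
    (hT : ∀ z : K, z ≠ 0 → T.eval (z + z⁻¹) = z ^ n + z⁻¹ ^ n) : T = C K n :=
  Polynomial.funext fun w => by
    obtain ⟨z, hz, rfl⟩ := exists_ne_zero_add_inv_eq w
    rw [hT z hz, C_natCast_eval_add_inv hz]

theorem C_natCast_mem_rotationInvariants {ε : K} (hε0 : ε ≠ 0) {n : ℕ} (hε : ε ^ n = 1) :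
    C K n ∈ rotationInvariants ε := fun z hz => by
  rw [C_natCast_eval_add_inv (mul_ne_zero hε0 hz), C_natCast_eval_add_inv hz, mul_inv, mul_pow,
    mul_pow, inv_pow, hε, inv_one, one_mul, one_mul]

end Polynomial.Chebyshev

noncomputable def laurentLift (p : K[X]) : K[X] :=
  ∑ i ∈ Finset.range (p.natDegree + 1), C (p.coeff i) * X ^ (p.natDegree - i) * (X ^ 2 + 1) ^ i

theorem eval_laurentLift (p : K[X]) {z : K} (hz : z ≠ 0) :
    (laurentLift p).eval z = z ^ p.natDegree * p.eval (z + z⁻¹) := by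
  rw [laurentLift, eval_finsetSum, eval_eq_sum_range, Finset.mul_sum]
  refine Finset.sum_congr rfl fun i hi => ?_
  have hi : i ≤ p.natDegree := Nat.lt_succ_iff.mp (Finset.mem_range.mp hi)
  have hz2 : z ^ 2 + 1 = z * (z + z⁻¹) := by field_simp
  simp only [eval_mul, eval_pow, eval_add, eval_C, eval_X, eval_one]
  rw [hz2, mul_pow, ← pow_sub_mul_pow z hi]
  ring

theorem eval_zero_laurentLift (p : K[X]) : (laurentLift p).eval 0 = p.leadingCoeff := by
  rw [laurentLift, eval_finsetSum, Finset.sum_range_succ, Finset.sum_eq_zero]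
  · simp
  · intro i hi
    have : p.natDegree - i ≠ 0 := by have := Finset.mem_range.mp hi; omega
    simp [zero_pow this]

theorem pow_natDegree_eq_one_of_mem_rotationInvariants [Infinite K] {ε : K} (hε : ε ≠ 0)
    {φ : K[X]} (hφ : φ ∈ rotationInvariants ε) (hφ0 : φ ≠ 0) : ε ^ φ.natDegree = 1 := by
  have hlift : (laurentLift φ).comp (C ε * X) = C (ε ^ φ.natDegree) * laurentLift φ := by
    refine eq_of_infinite_eval_eq _ _ ((Set.finite_singleton 0).infinite_compl.mono ?_)
    intro z (hz : z ≠ 0)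
    rw [Set.mem_ofPred_eq, eval_comp, eval_mul, eval_mul, eval_C, eval_X, eval_C,
      eval_laurentLift _ (mul_ne_zero hε hz), eval_laurentLift _ hz, hφ z hz, mul_pow, mul_assoc]
  have h0 := congrArg (eval 0) hlift
  rw [eval_comp, eval_mul, eval_C, eval_X, mul_zero, eval_mul, eval_C, eval_zero_laurentLift] at h0
  exact (mul_eq_right₀ (leadingCoeff_ne_zero.mpr hφ0)).mp h0.symm

theorem dvd_natDegree_of_mem_rotationInvariants [Infinite K] {ε : K} {d : ℕ}
    (hε : IsPrimitiveRoot ε d) (hd : d ≠ 0) {φ : K[X]} (hφ : φ ∈ rotationInvariants ε)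
    (hφ0 : φ ≠ 0) : d ∣ φ.natDegree :=
  (hε.pow_eq_one_iff_dvd _).mp
    (pow_natDegree_eq_one_of_mem_rotationInvariants (hε.ne_zero hd) hφ hφ0)

theorem rotationInvariants_le_adjoin [Infinite K] {ε : K} {d : ℕ} (hε : IsPrimitiveRoot ε d)
    (hd : d ≠ 0) {T : K[X]} (hTm : T.Monic) (hTd : T.natDegree = d)
    (hT : T ∈ rotationInvariants ε) : rotationInvariants ε ≤ Algebra.adjoin K {T} := by
  intro φ hφ
  induction φ using degree_lt_wf.induction with
  | _ φ ih =>
  by_cases hφc : φ.degree ≤ 0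
  · rw [eq_C_of_degree_le_zero hφc]
    exact Subalgebra.algebraMap_mem _ _
  have hφ0 : φ ≠ 0 := fun h => hφc (by simp [h])
  have hlc : φ.leadingCoeff ≠ 0 := leadingCoeff_ne_zero.mpr hφ0
  obtain ⟨m, hm⟩ := dvd_natDegree_of_mem_rotationInvariants hε hd hφ hφ0
  set τ : K[X] := C φ.leadingCoeff * T ^ m
  have hτ_deg : τ.degree = φ.degree := by
    rw [degree_C_mul hlc, degree_pow, degree_eq_natDegree hTm.ne_zero,
      degree_eq_natDegree hφ0, hTd, hm, nsmul_eq_mul, mul_comm]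
    norm_cast
  have hτ_lc : τ.leadingCoeff = φ.leadingCoeff := by
    rw [leadingCoeff_mul, leadingCoeff_C, (hTm.pow m).leadingCoeff, mul_one]
  have hτ : τ ∈ rotationInvariants ε :=
    mul_mem (Subalgebra.algebraMap_mem _ _) (pow_mem hT m)
  have hψ : φ - τ ∈ Algebra.adjoin K {T} :=
    ih (φ - τ) (degree_sub_lt_left hτ_deg.symm hφ0 hτ_lc.symm) (sub_mem hφ hτ)
  have hτ' : τ ∈ Algebra.adjoin K {T} :=
    mul_mem (Subalgebra.algebraMap_mem _ _) (pow_mem (Algebra.self_mem_adjoin_singleton K T) m)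
  simpa using add_mem hψ hτ'

end RotationInvariants

theorem stmt11 (d : ℕ) (hd : 2 ≤ d) (ε : ℂ) (hε : IsPrimitiveRoot ε d)
    (Td : Polynomial ℂ)
    (hTd : ∀ z : ℂ, z ≠ 0 → Td.eval (z + z⁻¹) = z ^ d + z⁻¹ ^ d)
    (φ : Polynomial ℂ)
    (hφ : ∀ z : ℂ, z ≠ 0 → φ.eval (ε * z + (ε * z)⁻¹) = φ.eval (z + z⁻¹)) :
    ∃ P : Polynomial ℂ, φ = P.comp Td ∧ (0 < φ.degree → (d : ℕ) ∣ φ.natDegree) := by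
  have hd0 : d ≠ 0 := by omega
  obtain rfl : Td = Chebyshev.C ℂ d := Chebyshev.eq_C_natCast_of_eval_add_inv hTd
  have hφT : φ ∈ Algebra.adjoin ℂ {Chebyshev.C ℂ d} :=
    rotationInvariants_le_adjoin hε hd0 (Chebyshev.monic_C_natCast hd0)
      (Chebyshev.natDegree_C_natCast d)
      (Chebyshev.C_natCast_mem_rotationInvariants (hε.ne_zero hd0) hε.pow_eq_one) hφ
  rw [Algebra.adjoin_singleton_eq_range_aeval] at hφT
  obtain ⟨P, rfl⟩ := hφT
  exact ⟨P, comp_eq_aeval.symm, fun hdeg =>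
    dvd_natDegree_of_mem_rotationInvariants hε hd0 hφ (ne_zero_of_degree_gt hdeg)⟩
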